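/- arXiv:2405.12343 — 2 statements merged into one kernel-verified Lean document; each statement's English description precedes it below -/
import Mathlib

section
/- Let K < K*, let Q_K be a K×K stochastic matrix with positive entries and Q̃ the K*×K* split matrix obtained by splitting state K into K*−K+1 equally weighted copies as above. Let φ_K = (Q_K; θ_1, ..., θ_K) and φ̃ = (Q̃; θ_1, ..., θ_{K−1}, θ_K, θ_K, ..., θ_K) (the last K*−K+1 emission parameters all equal θ_K). Then for every n and every observation sequence y_{1:n}, the stationary HMM likelihoods agree: p_K(y_{1:n} | φ_K) = p_{K*}(y_{1:n} | φ̃). -/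
/-- Stationary likelihood of a `K`-state HMM (as in the paper). -/
def hmmLik {𝓨 ϴ : Type*} (K n : ℕ) (Q : Fin K → Fin K → ℝ) (μ : Fin K → ℝ)
    (f : 𝓨 → ϴ → ℝ) (θv : Fin K → ϴ) (y : Fin (n + 1) → 𝓨) : ℝ :=
  ∑ x : Fin (n + 1) → Fin K,
    μ (x 0) * (∏ i : Fin n, Q (x i.castSucc) (x i.succ)) * ∏ i, f (y i) (θv (x i))

/-- The map from split states back to original states. -/
def splitEmb (K Kstar : ℕ) (hK : 0 < K) (k : Fin Kstar) : Fin K :=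
  ⟨min k.val (K - 1), by omega⟩

/-- The split transition matrix: the last state of a `K`-state chain is split into
`K* − K + 1` states with equal probabilities. -/
noncomputable def splitQ (K Kstar : ℕ) (hK : 0 < K) (Q : Fin K → Fin K → ℝ)
    (k ℓ : Fin Kstar) : ℝ :=
  Q (splitEmb K Kstar hK k) (splitEmb K Kstar hK ℓ) *
    (if K - 1 ≤ ℓ.val then (((Kstar - K + 1 : ℕ) : ℝ))⁻¹ else 1)

/-- The split invariant vector. -/
noncomputable def splitμ (K Kstar : ℕ) (hK : 0 < K) (μ : Fin K → ℝ) (k : Fin Kstar) : ℝ :=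
  μ (splitEmb K Kstar hK k) * (if K - 1 ≤ k.val then (((Kstar - K + 1 : ℕ) : ℝ))⁻¹ else 1)

/-!
Every path `z` of the split chain projects to the path `π ∘ z` of the original chain, with
`π = splitEmb`, and its weight factors as the weight of `π ∘ z` times `∏ i, w (z i)`, where
`w` is `(K* − K + 1)⁻¹` on the copies of the last state and `1` elsewhere. Over the paths
with a given projection `x` this product sums to `∏ i, ∑_{π ℓ = x i} w ℓ = 1`, since each
fibre of `π` carries total weight one.
-/

open Finset

theorem sum_comp_mul_prod_eq_sum {ι α β R : Type*} [Fintype ι] [DecidableEq ι] [Fintype α]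
    [DecidableEq α] [Fintype β] [CommSemiring R] (π : β → α) (w : β → R)
    (hw : ∀ a, ∑ b with π b = a, w b = 1) (g : (ι → α) → R) :
    ∑ z : ι → β, g (π ∘ z) * ∏ i, w (z i) = ∑ x, g x := by
  rw [← sum_fiberwise univ (π ∘ ·)]
  refine sum_congr rfl fun x _ => ?_
  have hfiber : ({z | π ∘ z = x} : Finset (ι → β)) =
      Fintype.piFinset fun i => {b | π b = x i} := by
    ext z
    simp [Fintype.mem_piFinset, funext_iff]
  calc ∑ z with π ∘ z = x, g (π ∘ z) * ∏ i, w (z i)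
      = g x * ∑ z ∈ Fintype.piFinset (fun i => {b | π b = x i}), ∏ i, w (z i) := by
        rw [mul_sum, ← hfiber]
        exact sum_congr rfl fun z hz => by rw [(mem_filter.mp hz).2]
    _ = g x := by rw [← prod_univ_sum, prod_congr rfl fun i _ => hw (x i), prod_const_one,
        mul_one]

theorem hmmLik_comp_mul_weight {𝓨 ϴ : Type*} {K K' : ℕ} (n : ℕ) (π : Fin K' → Fin K)
    (w : Fin K' → ℝ) (hw : ∀ k, ∑ ℓ with π ℓ = k, w ℓ = 1) (Q : Fin K → Fin K → ℝ)
    (μ : Fin K → ℝ) (f : 𝓨 → ϴ → ℝ) (θv : Fin K → ϴ) (y : Fin (n + 1) → 𝓨) :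
    hmmLik K' n (fun k ℓ => Q (π k) (π ℓ) * w ℓ) (fun k => μ (π k) * w k) f (θv ∘ π) y =
      hmmLik K n Q μ f θv y := by
  unfold hmmLik
  rw [← sum_comp_mul_prod_eq_sum π w hw]
  refine sum_congr rfl fun z _ => ?_
  simp only [Function.comp_apply, prod_mul_distrib, Fin.prod_univ_succ (fun i => w (z i))]
  ring

/-- `splitQ` and `splitμ` are, definitionally, `Q` and `μ` pulled back along `splitEmb` and
multiplied by this weight of the target state. -/
noncomputable def splitWeight (K Kstar : ℕ) (ℓ : Fin Kstar) : ℝ :=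
  if K - 1 ≤ ℓ.val then (((Kstar - K + 1 : ℕ) : ℝ))⁻¹ else 1

theorem sum_splitWeight_fiber {K Kstar : ℕ} (hK : 0 < K) (hKK : K ≤ Kstar) (k : Fin K) :
    ∑ ℓ with splitEmb K Kstar hK ℓ = k, splitWeight K Kstar ℓ = 1 := by
  by_cases hlast : K - 1 ≤ k.val
  · have hfiber : ({ℓ | splitEmb K Kstar hK ℓ = k} : Finset (Fin Kstar)) =
        Ici ⟨K - 1, by omega⟩ := by
      ext ℓ
      simp only [mem_filter, mem_univ, true_and, mem_Ici, splitEmb, Fin.ext_iff, Fin.le_def]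
      omega
    have hcard : #(Ici (⟨K - 1, by omega⟩ : Fin Kstar)) = Kstar - K + 1 := by
      rw [Fin.card_Ici, Fin.val_mk]
      omega
    have hweight : ∀ ℓ ∈ Ici (⟨K - 1, by omega⟩ : Fin Kstar),
        splitWeight K Kstar ℓ = (((Kstar - K + 1 : ℕ) : ℝ))⁻¹ :=
      fun ℓ hℓ => if_pos (Fin.le_def.mp (mem_Ici.mp hℓ))
    rw [hfiber, sum_congr rfl hweight, sum_const, hcard, nsmul_eq_mul,
      mul_inv_cancel₀ (by positivity)]
  · have hfiber : ({ℓ | splitEmb K Kstar hK ℓ = k} : Finset (Fin Kstar)) =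
        {⟨k.val, by omega⟩} := by
      ext ℓ
      simp only [mem_filter, mem_univ, true_and, mem_singleton, splitEmb, Fin.ext_iff]
      omega
    rw [hfiber, sum_singleton]
    exact if_neg hlast

theorem split_hmm_likelihood_eq_general
    {𝓨 ϴ : Type*} (K Kstar n : ℕ) (hK : 0 < K) (hKK : K < Kstar)
    (Q : Fin K → Fin K → ℝ)
    (μ : Fin K → ℝ)
    (f : 𝓨 → ϴ → ℝ) (θv : Fin K → ϴ) (y : Fin (n + 1) → 𝓨) :
    hmmLik K n Q μ f θv y =
      hmmLik Kstar n (splitQ K Kstar hK Q) (splitμ K Kstar hK μ) f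
        (fun k => θv (splitEmb K Kstar hK k)) y :=
  (hmmLik_comp_mul_weight n (splitEmb K Kstar hK) (splitWeight K Kstar)
    (sum_splitWeight_fiber hK hKK.le) Q μ f θv y).symm

/-- Splitting the last state of a `K`-state HMM into `K* − K + 1` equally weighted
copies, all carrying the same emission parameter as the original last state, leaves the
stationary likelihood of every observation sequence unchanged:
`p_K(y_{1:n} | φ_K) = p_{K*}(y_{1:n} | φ̃)`. -/
theorem split_hmm_likelihood_eq
    {𝓨 ϴ : Type*} (K Kstar n : ℕ) (hK : 0 < K) (hKK : K < Kstar)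
    (Q : Fin K → Fin K → ℝ)
    (hQpos : ∀ k ℓ, 0 < Q k ℓ) (hQrow : ∀ k, ∑ ℓ, Q k ℓ = 1)
    (μ : Fin K → ℝ) (hμnonneg : ∀ k, 0 ≤ μ k) (hμsum : ∑ k, μ k = 1)
    (hμinv : ∀ ℓ, ∑ k, μ k * Q k ℓ = μ ℓ)
    (f : 𝓨 → ϴ → ℝ) (θv : Fin K → ϴ) (y : Fin (n + 1) → 𝓨) :
    hmmLik K n Q μ f θv y =
      hmmLik Kstar n (splitQ K Kstar hK Q) (splitμ K Kstar hK μ) f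
        (fun k => θv (splitEmb K Kstar hK k)) y :=
  split_hmm_likelihood_eq_general K Kstar n hK hKK Q μ f θv y
end

section
/- Let S = (S_1, ..., S_{K*}) be a partition of {1,...,K} with nonempty blocks and s(k) its block function. Let W = (W_{ij}) be a K×K matrix with entries in (0,1), and let Q = (q_{ij}) be a K×K stochastic matrix with positive entries and invariant probability μ such that for all i, j: μ_i q_{ij} = W_{ij} Σ_{k∈S_{s(i)}} Σ_{ℓ∈S_{s(j)}} μ_k q_{kℓ}. Define R_{ab} := Σ_{k∈S_a} Σ_{ℓ∈S_b} μ_k q_{kℓ} for 1 ≤ a, b ≤ K*. Then for all i, j: q_{ij} = W_{ij} R_{s(i)s(j)} / (Σ_{ℓ=1}^{K} W_{iℓ} R_{s(i)s(ℓ)}). In other words, Q is recovered from (S, W, R) by the formula ψ_{α,ij}(R) = W_{ij} R_{s(i)s(j)} / Σ_ℓ W_{iℓ} R_{s(i)s(ℓ)}. -/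
open Finset

/-- Recovery of the transition matrix from the reparameterization `(S, W, R)`: if the
stationary pair probabilities satisfy `μ_i q_{ij} = W_{ij} Σ_{k∈S_{s(i)}} Σ_{ℓ∈S_{s(j)}}
μ_k q_{kℓ}` with weights `W_{ij} ∈ (0,1)`, and `R_{ab} = Σ_{k∈S_a} Σ_{ℓ∈S_b} μ_k q_{kℓ}`,
then `q_{ij} = W_{ij} R_{s(i)s(j)} / Σ_ℓ W_{iℓ} R_{s(i)s(ℓ)}` for all `i, j`. -/
theorem transition_recovery
    (K Kstar : ℕ) (s : Fin K → Fin Kstar) (hs : Function.Surjective s)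
    (W : Fin K → Fin K → ℝ) (hW : ∀ i j, W i j ∈ Set.Ioo (0 : ℝ) 1)
    (Q : Fin K → Fin K → ℝ)
    (hQpos : ∀ k ℓ, 0 < Q k ℓ) (hQrow : ∀ k, ∑ ℓ, Q k ℓ = 1)
    (μ : Fin K → ℝ) (hμpos : ∀ k, 0 < μ k) (hμsum : ∑ k, μ k = 1)
    (hμinv : ∀ ℓ, ∑ k, μ k * Q k ℓ = μ ℓ)
    (hconstraint : ∀ i j, μ i * Q i j =
      W i j * ∑ k ∈ univ.filter fun k => s k = s i,
        ∑ ℓ ∈ univ.filter fun ℓ => s ℓ = s j, μ k * Q k ℓ)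
    (R : Fin Kstar → Fin Kstar → ℝ)
    (hR : ∀ a b, R a b =
      ∑ k ∈ univ.filter fun k => s k = a,
        ∑ ℓ ∈ univ.filter fun ℓ => s ℓ = b, μ k * Q k ℓ) :
    ∀ i j, Q i j = W i j * R (s i) (s j) / ∑ ℓ, W i ℓ * R (s i) (s ℓ) := by
  intro i j
  have key : ∀ j, μ i * Q i j = W i j * R (s i) (s j) := fun j => by
    rw [hR]; exact hconstraint i j
  have hden : ∑ ℓ, W i ℓ * R (s i) (s ℓ) = μ i := by
    calc ∑ ℓ, W i ℓ * R (s i) (s ℓ) = ∑ ℓ, μ i * Q i ℓ := by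
          simp_rw [← key]
      _ = μ i := by rw [← Finset.mul_sum, hQrow, mul_one]
  rw [hden, ← key j, mul_comm, mul_div_assoc, div_self (hμpos i).ne', mul_one]
end
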